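/- Define the mean energy E(t) = (σ²L/(2νπ²))·∑_{k=1}^∞ (1 − exp(−2νπ²k²t/L²))/k² for σ, ν, L, t > 0. Then for all t > 0: 0 ≤ σ²L/(12ν) − E(t) ≤ (σ²L/(12ν))·exp(−2νπ²t/L²). In particular E(t) converges to σ²L/(12ν) as t → ∞. -/

import Mathlib

open Real Filter

/-- The mean energy `E(t) = (σ²L/(2νπ²)) ∑_{k=1}^∞ (1 - e^{-2νπ²k²t/L²})/k²`. -/
noncomputable def meanEnergy (σ ν L t : ℝ) : ℝ :=
  σ ^ 2 * L / (2 * ν * π ^ 2) *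
    ∑' k : ℕ, (1 - Real.exp (-2 * ν * π ^ 2 * ((k : ℝ) + 1) ^ 2 * t / L ^ 2)) /
      ((k : ℝ) + 1) ^ 2

lemma hasSum_basel_succ : HasSum (fun k : ℕ => (1 : ℝ) / ((k : ℝ) + 1) ^ 2) (π ^ 2 / 6) := by
  have h := hasSum_zeta_two
  have h2 := (hasSum_nat_add_iff' (f := fun n : ℕ => (1 : ℝ) / (n : ℝ) ^ 2) 1).mpr h
  simpa using h2

lemma aux_bounds (σ ν L : ℝ) (hσ : 0 < σ) (hν : 0 < ν) (hL : 0 < L) (t : ℝ) (ht : 0 < t) :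
    0 ≤ σ ^ 2 * L / (12 * ν) - meanEnergy σ ν L t ∧
      σ ^ 2 * L / (12 * ν) - meanEnergy σ ν L t ≤
        σ ^ 2 * L / (12 * ν) * Real.exp (-2 * ν * π ^ 2 * t / L ^ 2) := by
  have hπ : (0 : ℝ) < π := Real.pi_pos
  set a : ℝ := 2 * ν * π ^ 2 * t / L ^ 2 with ha_def
  have ha : 0 < a := by positivity
  set g : ℕ → ℝ := fun k => Real.exp (-(a * ((k : ℝ) + 1) ^ 2)) / ((k : ℝ) + 1) ^ 2 with hg_def
  have hg_nonneg : ∀ k, 0 ≤ g k := fun k => by positivity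
  have hg_le : ∀ k : ℕ, g k ≤ Real.exp (-a) * (1 / ((k : ℝ) + 1) ^ 2) := by
    intro k
    have hk1 : (1 : ℝ) ≤ ((k : ℝ) + 1) ^ 2 := by nlinarith [Nat.cast_nonneg (α := ℝ) k]
    have : Real.exp (-(a * ((k : ℝ) + 1) ^ 2)) ≤ Real.exp (-a) := by
      apply Real.exp_le_exp.mpr
      nlinarith
    calc g k ≤ Real.exp (-a) / ((k : ℝ) + 1) ^ 2 := by
            show Real.exp (-(a * ((k : ℝ) + 1) ^ 2)) / ((k : ℝ) + 1) ^ 2 ≤ _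
            gcongr
          _ = Real.exp (-a) * (1 / ((k : ℝ) + 1) ^ 2) := by ring
  have hRsum : HasSum (fun k : ℕ => Real.exp (-a) * (1 / ((k : ℝ) + 1) ^ 2))
      (Real.exp (-a) * (π ^ 2 / 6)) := hasSum_basel_succ.mul_left _
  have hg_summable : Summable g :=
    Summable.of_nonneg_of_le hg_nonneg hg_le hRsum.summable
  have hf : HasSum (fun k : ℕ => 1 / ((k : ℝ) + 1) ^ 2 - g k) (π ^ 2 / 6 - ∑' k, g k) :=
    hasSum_basel_succ.sub hg_summable.hasSum
  have hterm : ∀ k : ℕ,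
      (1 - Real.exp (-2 * ν * π ^ 2 * ((k : ℝ) + 1) ^ 2 * t / L ^ 2)) / ((k : ℝ) + 1) ^ 2
        = 1 / ((k : ℝ) + 1) ^ 2 - g k := by
    intro k
    have harg : -2 * ν * π ^ 2 * ((k : ℝ) + 1) ^ 2 * t / L ^ 2 = -(a * ((k : ℝ) + 1) ^ 2) := by
      rw [ha_def]; field_simp
    rw [harg, hg_def]
    ring
  have hE : meanEnergy σ ν L t
      = σ ^ 2 * L / (2 * ν * π ^ 2) * (π ^ 2 / 6 - ∑' k, g k) := by
    unfold meanEnergy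
    congr 1
    rw [tsum_congr hterm]
    exact hf.tsum_eq
  have hC : σ ^ 2 * L / (2 * ν * π ^ 2) * (π ^ 2 / 6) = σ ^ 2 * L / (12 * ν) := by
    field_simp; ring
  have hdiff : σ ^ 2 * L / (12 * ν) - meanEnergy σ ν L t
      = σ ^ 2 * L / (2 * ν * π ^ 2) * ∑' k, g k := by
    rw [hE, mul_sub, hC]; ring
  have hCpos : 0 < σ ^ 2 * L / (2 * ν * π ^ 2) := by positivity
  constructor
  · rw [hdiff]
    exact mul_nonneg hCpos.le (tsum_nonneg hg_nonneg)
  · rw [hdiff]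
    have hsum_le : ∑' k, g k ≤ Real.exp (-a) * (π ^ 2 / 6) := by
      rw [← hRsum.tsum_eq]
      exact Summable.tsum_le_tsum hg_le hg_summable hRsum.summable
    have harg : -2 * ν * π ^ 2 * t / L ^ 2 = -a := by rw [ha_def]; ring
    calc σ ^ 2 * L / (2 * ν * π ^ 2) * ∑' k, g k
        ≤ σ ^ 2 * L / (2 * ν * π ^ 2) * (Real.exp (-a) * (π ^ 2 / 6)) := by
          exact mul_le_mul_of_nonneg_left hsum_le hCpos.le
      _ = σ ^ 2 * L / (12 * ν) * Real.exp (-2 * ν * π ^ 2 * t / L ^ 2) := by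
          rw [harg, ← hC]; ring

/-- Long-time behavior of the mean energy: `0 ≤ σ²L/(12ν) - E(t) ≤ (σ²L/(12ν)) e^{-2νπ²t/L²}`
for all `t > 0`; in particular `E(t) → σ²L/(12ν)` as `t → ∞`. -/
theorem mean_energy_long_time (σ ν L : ℝ) (hσ : 0 < σ) (hν : 0 < ν) (hL : 0 < L) :
    (∀ t : ℝ, 0 < t →
        0 ≤ σ ^ 2 * L / (12 * ν) - meanEnergy σ ν L t ∧
          σ ^ 2 * L / (12 * ν) - meanEnergy σ ν L t ≤
            σ ^ 2 * L / (12 * ν) * Real.exp (-2 * ν * π ^ 2 * t / L ^ 2)) ∧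
      Tendsto (fun t : ℝ => meanEnergy σ ν L t) atTop (nhds (σ ^ 2 * L / (12 * ν))) := by
  have hπ : (0 : ℝ) < π := Real.pi_pos
  refine ⟨fun t ht => aux_bounds σ ν L hσ hν hL t ht, ?_⟩
  set S : ℝ := σ ^ 2 * L / (12 * ν) with hS
  have hexp0 : Tendsto (fun t : ℝ => Real.exp (-2 * ν * π ^ 2 * t / L ^ 2)) atTop (nhds 0) := by
    have h1 : Tendsto (fun t : ℝ => -2 * ν * π ^ 2 * t / L ^ 2) atTop atBot := by
      have hc : -2 * ν * π ^ 2 / L ^ 2 < 0 := by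
        rw [show -2 * ν * π ^ 2 / L ^ 2 = -(2 * ν * π ^ 2 / L ^ 2) by ring]
        have : 0 < 2 * ν * π ^ 2 / L ^ 2 := by positivity
        linarith
      have h2 := (tendsto_const_mul_atBot_of_neg (f := fun t : ℝ => t)
        (l := atTop) hc).mpr tendsto_id
      have heq : (fun t : ℝ => -2 * ν * π ^ 2 / L ^ 2 * t)
          = fun t : ℝ => -2 * ν * π ^ 2 * t / L ^ 2 := by funext t; ring
      rwa [heq] at h2
    exact Real.tendsto_exp_atBot.comp h1
  have hlow : Tendsto (fun t : ℝ => S - S * Real.exp (-2 * ν * π ^ 2 * t / L ^ 2)) atTop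
      (nhds S) := by
    have := (tendsto_const_nhds (x := S) (f := atTop (α := ℝ))).sub
      ((tendsto_const_nhds (x := S)).mul hexp0)
    simpa using this
  refine tendsto_of_tendsto_of_tendsto_of_le_of_le' hlow tendsto_const_nhds ?_ ?_
  · filter_upwards [eventually_gt_atTop (0 : ℝ)] with t ht
    have := (aux_bounds σ ν L hσ hν hL t ht).2
    linarith
  · filter_upwards [eventually_gt_atTop (0 : ℝ)] with t ht
    have := (aux_bounds σ ν L hσ hν hL t ht).1
    linarith
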